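/- Let N ≥ 1, let C be an N×N real matrix, and let β > 0. Let m(β) denote the minimum of S_{β,C}(B) := ⟨C, B⟩_F − (1/β)·H(B) over all N×N doubly stochastic matrices B, and let m* denote the minimum of ⟨C, P⟩_F over all N×N permutation matrices P. Then 0 ≤ m* − m(β) ≤ (N · log N)/β; in particular, m(β) → m* as β → ∞. -/

import Mathlib

/-!
A permutation matrix is doubly stochastic and has zero entropy, so `m β ≤ m*`. Conversely,
every row of a doubly stochastic `B` is a probability vector, of entropy at most `log N`, so
`H(B) ≤ N log N`; and by Birkhoff's theorem `B` lies in the convex hull of the permutation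
matrices, so the linear functional `⟨C, ·⟩_F` is at least `m*` at `B`. Hence
`S_{β,C}(B) ≥ m* - N log N / β`.
-/

open Filter Topology

/-- An `N × N` real matrix is doubly stochastic if all its entries are non-negative
and every row sum and every column sum equals 1. -/
def IsDoublyStochastic {N : ℕ} (B : Matrix (Fin N) (Fin N) ℝ) : Prop :=
  (∀ i j, 0 ≤ B i j) ∧ (∀ i, ∑ j, B i j = 1) ∧ (∀ j, ∑ i, B i j = 1)

/-- The Frobenius inner product `⟨X, Y⟩_F = Σ_{ij} X_{ij} Y_{ij}`. -/
def frob {N : ℕ} (X Y : Matrix (Fin N) (Fin N) ℝ) : ℝ :=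
  ∑ i, ∑ j, X i j * Y i j

/-- The entropy `H(B) = -Σ_{ij} B_{ij} log B_{ij}` (with `0 log 0 = 0`, which is
automatic since `Real.log 0 = 0`). -/
noncomputable def entH {N : ℕ} (B : Matrix (Fin N) (Fin N) ℝ) : ℝ :=
  -∑ i, ∑ j, B i j * Real.log (B i j)

/-- The entropy-regularized objective `S_{β,C}(B) = ⟨C, B⟩_F - (1/β) H(B)`. -/
noncomputable def Sobj {N : ℕ} (β : ℝ) (C B : Matrix (Fin N) (Fin N) ℝ) : ℝ :=
  frob C B - (1 / β) * entH B

/-- The permutation matrix of `σ`: `P_{ij} = 1` if `j = σ i`, else `0`. -/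
def permMat {N : ℕ} (σ : Equiv.Perm (Fin N)) : Matrix (Fin N) (Fin N) ℝ :=
  Matrix.of fun i j => if σ i = j then 1 else 0

/-- A matrix is a permutation matrix if it arises from some permutation. -/
def IsPermMatrix {N : ℕ} (P : Matrix (Fin N) (Fin N) ℝ) : Prop :=
  ∃ σ : Equiv.Perm (Fin N), P = permMat σ

open Real

-- Jensen for the concave `negMulLog` with uniform weights, using `negMulLog (1 / n) = log n / n`.
theorem Real.sum_negMulLog_le_log_card {ι : Type*} [Fintype ι] {p : ι → ℝ}
    (h0 : ∀ i, 0 ≤ p i) (h1 : ∑ i, p i = 1) :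
    ∑ i, negMulLog (p i) ≤ log (Fintype.card ι) := by
  have hι : Nonempty ι := by
    by_contra hempty
    simp [not_nonempty_iff.mp hempty] at h1
  set n : ℝ := (Fintype.card ι : ℝ)
  have hn : 0 < n := by simp [n, Fintype.card_pos]
  have jensen := concaveOn_negMulLog.le_map_sum (t := Finset.univ) (w := fun _ => 1 / n) (p := p)
    (fun _ _ => by positivity) (by simp [n]) (fun i _ => h0 i)
  simp only [smul_eq_mul, ← Finset.mul_sum, h1, mul_one] at jensen
  have hmean : negMulLog (1 / n) = 1 / n * log n := by simp [negMulLog, log_inv]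
  rw [hmean] at jensen
  exact le_of_mul_le_mul_left jensen (by positivity)

section Matrices

variable {N : ℕ}

theorem entH_eq_sum_negMulLog (B : Matrix (Fin N) (Fin N) ℝ) :
    entH B = ∑ i, ∑ j, negMulLog (B i j) := by
  simp [entH, negMulLog_eq_neg, Finset.sum_neg_distrib]

theorem entH_le_mul_log {B : Matrix (Fin N) (Fin N) ℝ} (h0 : ∀ i j, 0 ≤ B i j)
    (hrow : ∀ i, ∑ j, B i j = 1) : entH B ≤ N * log N := by
  calc entH B = ∑ i, ∑ j, negMulLog (B i j) := entH_eq_sum_negMulLog B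
    _ ≤ ∑ _i : Fin N, log N :=
      Finset.sum_le_sum fun i _ => by simpa using sum_negMulLog_le_log_card (h0 i) (hrow i)
    _ = N * log N := by simp

theorem isDoublyStochastic_iff_mem_doublyStochastic {B : Matrix (Fin N) (Fin N) ℝ} :
    IsDoublyStochastic B ↔ B ∈ doublyStochastic ℝ (Fin N) :=
  mem_doublyStochastic_iff_sum.symm

theorem permMat_eq_permMatrix (σ : Equiv.Perm (Fin N)) : permMat σ = σ.permMatrix ℝ := by
  ext i j
  simp [permMat, Equiv.Perm.permMatrix, PEquiv.toMatrix_apply, Equiv.toPEquiv_apply]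

theorem isDoublyStochastic_permMat (σ : Equiv.Perm (Fin N)) : IsDoublyStochastic (permMat σ) := by
  rw [isDoublyStochastic_iff_mem_doublyStochastic, permMat_eq_permMatrix]
  exact permMatrix_mem_doublyStochastic

theorem entH_permMat (σ : Equiv.Perm (Fin N)) : entH (permMat σ) = 0 := by
  simp only [entH_eq_sum_negMulLog, permMat, Matrix.of_apply]
  exact Finset.sum_eq_zero fun i _ => Finset.sum_eq_zero fun j _ => by split_ifs <;> simp

theorem Sobj_permMat (β : ℝ) (C : Matrix (Fin N) (Fin N) ℝ) (σ : Equiv.Perm (Fin N)) :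
    Sobj β C (permMat σ) = frob C (permMat σ) := by
  simp [Sobj, entH_permMat]

def frobLinearMap (C : Matrix (Fin N) (Fin N) ℝ) : Matrix (Fin N) (Fin N) ℝ →ₗ[ℝ] ℝ where
  toFun := frob C
  map_add' X Y := by simp [frob, mul_add, Finset.sum_add_distrib]
  map_smul' c X := by simp [frob, Finset.mul_sum, mul_left_comm]

theorem exists_frob_permMat_le (C : Matrix (Fin N) (Fin N) ℝ) {B : Matrix (Fin N) (Fin N) ℝ}
    (hB : IsDoublyStochastic B) : ∃ σ : Equiv.Perm (Fin N), frob C (permMat σ) ≤ frob C B := by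
  rw [isDoublyStochastic_iff_mem_doublyStochastic, ← SetLike.mem_coe,
    doublyStochastic_eq_convexHull_permMatrix] at hB
  obtain ⟨_, ⟨σ, rfl⟩, hσ⟩ :=
    ((frobLinearMap C).concaveOn convex_univ).exists_le_of_mem_convexHull (Set.subset_univ _) hB
  exact ⟨σ, by rwa [permMat_eq_permMatrix]⟩

end Matrices

theorem tendsto_of_sub_nonneg_of_sub_le_div {f : ℝ → ℝ} {a c : ℝ}
    (h : ∀ β : ℝ, 0 < β → 0 ≤ a - f β ∧ a - f β ≤ c / β) : Tendsto f atTop (𝓝 a) := by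
  have hlow : Tendsto (fun β => a - c / β) atTop (𝓝 a) := by
    simpa using tendsto_const_nhds.sub ((tendsto_const_nhds (x := c)).div_atTop tendsto_id)
  refine tendsto_of_tendsto_of_tendsto_of_le_of_le' hlow tendsto_const_nhds ?_ ?_ <;>
    filter_upwards [eventually_gt_atTop 0] with β hβ <;> linarith [h β hβ]

theorem sobj_min_tendsto_pit_min_general (N : ℕ)
    (C : Matrix (Fin N) (Fin N) ℝ) (m : ℝ → ℝ) (mstar : ℝ)
    (hm : ∀ β : ℝ, 0 < β →
      IsLeast {x : ℝ | ∃ B : Matrix (Fin N) (Fin N) ℝ,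
        IsDoublyStochastic B ∧ x = Sobj β C B} (m β))
    (hstar : IsLeast {x : ℝ | ∃ P : Matrix (Fin N) (Fin N) ℝ,
      IsPermMatrix P ∧ x = frob C P} mstar) :
    (∀ β : ℝ, 0 < β →
      0 ≤ mstar - m β ∧ mstar - m β ≤ N * Real.log N / β) ∧
    Tendsto m atTop (𝓝 mstar) := by
  have bounds : ∀ β : ℝ, 0 < β → 0 ≤ mstar - m β ∧ mstar - m β ≤ N * log N / β := by
    intro β hβ
    obtain ⟨⟨B, hB, hmB⟩, hm_le⟩ := hm β hβ
    obtain ⟨⟨_, ⟨σ, rfl⟩, hσ⟩, hstar_le⟩ := hstar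
    obtain ⟨τ, hτ⟩ := exists_frob_permMat_le C hB
    have hστ : mstar ≤ frob C (permMat τ) := hstar_le ⟨_, ⟨τ, rfl⟩, rfl⟩
    have hmσ : m β ≤ mstar := hm_le ⟨_, isDoublyStochastic_permMat σ, by rw [Sobj_permMat, hσ]⟩
    have hent : entH B / β ≤ N * log N / β := by
      gcongr
      exact entH_le_mul_log hB.1 hB.2.1
    rw [Sobj, one_div_mul_eq_div] at hmB
    constructor <;> linarith
  exact ⟨bounds, tendsto_of_sub_nonneg_of_sub_le_div bounds⟩

/-- If `m β` is the minimum of the entropy-regularized objective `S_{β,C}` over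
doubly stochastic matrices and `m*` is the minimum of `⟨C, P⟩_F` over permutation
matrices, then `0 ≤ m* - m β ≤ N log N / β`; in particular `m β → m*` as `β → ∞`. -/
theorem sobj_min_tendsto_pit_min (N : ℕ) (hN : 1 ≤ N)
    (C : Matrix (Fin N) (Fin N) ℝ) (m : ℝ → ℝ) (mstar : ℝ)
    (hm : ∀ β : ℝ, 0 < β →
      IsLeast {x : ℝ | ∃ B : Matrix (Fin N) (Fin N) ℝ,
        IsDoublyStochastic B ∧ x = Sobj β C B} (m β))
    (hstar : IsLeast {x : ℝ | ∃ P : Matrix (Fin N) (Fin N) ℝ,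
      IsPermMatrix P ∧ x = frob C P} mstar) :
    (∀ β : ℝ, 0 < β →
      0 ≤ mstar - m β ∧ mstar - m β ≤ N * Real.log N / β) ∧
    Tendsto m atTop (𝓝 mstar) :=
  sobj_min_tendsto_pit_min_general N C m mstar hm hstar
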